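/- The following Vandermonde mixed moment expansion coefficients for the uniform phase distribution hold: for ρ = {{1,3},{2,4}} (a partition of {1,…,4}), K_{ρ,u} = 2/3; for ρ = {{1,4},{2,5},{3,6}} (of {1,…,6}), K_{ρ,u} = 1/2; for ρ = {{1,4},{2,6},{3,5}} (of {1,…,6}), K_{ρ,u} = 1/2; for ρ = {{1,3,5},{2,4,6}} (of {1,…,6}), K_{ρ,u} = 11/20; for ρ = {{1,5},{3,7},{2,4,6}} (of {1,…,7}), K_{ρ,u} = 9/20; for ρ = {{1,6},{2,4},{3,5,7}} (of {1,…,7}), K_{ρ,u} = 9/20. -/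

import Mathlib

open MeasureTheory Filter Finset Matrix ProbabilityTheory
open scoped Classical Real

noncomputable section

/-- The `N × L` random Vandermonde matrix with phases `ω`:
entry `(k, l)` is `N^{-1/2} exp(-i k ω_l)`. -/
def vmat (N L : ℕ) (ω : Fin L → ℝ) : Matrix (Fin N) (Fin L) ℂ :=
  fun k l => (Real.sqrt N : ℂ)⁻¹ * Complex.exp (-Complex.I * ((k : ℕ) : ℂ) * ((ω l : ℝ) : ℂ))

/-- Normalized trace of an `m × m` complex matrix. -/
def ntr {m : ℕ} (A : Matrix (Fin m) (Fin m) ℂ) : ℂ := (m : ℂ)⁻¹ * A.trace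

/-- The joint law of `L` i.i.d. phases, each with law `μ`. -/
def phases (L : ℕ) (μ : Measure ℝ) [SigmaFinite μ] : Measure (Fin L → ℝ) :=
  Measure.pi fun _ => μ

/-- The uniform distribution on `[0, 2π)`. -/
def unif : Measure ℝ :=
  ((2 * Real.pi)⁻¹).toNNReal • (volume.restrict (Set.Ico 0 (2 * Real.pi)))

instance : IsProbabilityMeasure unif := by
  constructor
  have h : (0:ℝ) < 2 * Real.pi := by positivity
  simp only [unif, Measure.smul_apply, Measure.restrict_apply_univ, Real.volume_Ico, sub_zero,
    smul_eq_mul]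
  rw [ENNReal.smul_def, smul_eq_mul, ENNReal.ofReal, ← ENNReal.coe_mul,
    ← Real.toNNReal_mul (by positivity), inv_mul_cancel₀ (ne_of_gt h)]
  simp

/-- Partitions of `{1, …, n}` (represented as `Fin n`). -/
abbrev PartN (n : ℕ) := Finpartition (Finset.univ : Finset (Fin n))

/-- The block of `ρ` containing `k`. -/
def blkOf {n : ℕ} (ρ : PartN n) (k : Fin n) : Finset (Fin n) := ρ.part k

/-- The block of `ρ` containing `k`, as an element of `ρ.parts`. -/
def blkSub {n : ℕ} (ρ : PartN n) (k : Fin n) : {W // W ∈ ρ.parts} :=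
  ⟨ρ.part k, ρ.part_mem.2 (Finset.mem_univ k)⟩

/-- Cyclic predecessor on `Fin n`. -/
def cyc {n : ℕ} (k : Fin n) : Fin n := ⟨(k.val + n - 1) % n, Nat.mod_lt _ k.pos⟩

/-- Cyclic successor on `Fin n`. -/
def cycSucc {n : ℕ} (k : Fin n) : Fin n := ⟨(k.val + 1) % n, Nat.mod_lt _ k.pos⟩

/-- The Vandermonde mixed moment expansion coefficient `K_{ρ,ω,N}`, where `ω` has law `μ`:
`N^{|ρ|-n-1} Σ_{(i_1,…,i_n)} E[exp(i Σ_k i_k (ω_{b(k-1)} - ω_{b(k)}))]`, the `ω_W` being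
i.i.d. copies of `ω` indexed by the blocks of `ρ`. -/
def Kcoef (n : ℕ) (μ : Measure ℝ) [SigmaFinite μ] (ρ : PartN n) (N : ℕ) : ℂ :=
  (N : ℂ) ^ ((ρ.parts.card : ℤ) - (n : ℤ) - 1) *
    ∑ i : Fin n → Fin N,
      ∫ x : {W // W ∈ ρ.parts} → ℝ,
        Complex.exp (Complex.I * ∑ k : Fin n,
          ((i k : ℕ) : ℂ) * (((x (blkSub ρ (cyc k)) : ℝ) : ℂ) - ((x (blkSub ρ k) : ℝ) : ℂ)))
      ∂(Measure.pi fun _ => μ)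

/-- The mixed moment `E[tr_L(D_1 Vᴴ V D_2 Vᴴ V ⋯ D_n Vᴴ V)]`. -/
def mixedMoment (N L n : ℕ) (μ : Measure ℝ) [SigmaFinite μ]
    (D : Fin n → Matrix (Fin L) (Fin L) ℂ) : ℂ :=
  ∫ ω, ntr ((List.ofFn fun k : Fin n => D k * (vmat N L ω)ᴴ * vmat N L ω).prod) ∂(phases L μ)

/-- The moment `E[tr_L((D Vᴴ V)^n)]`. -/
def momExp (N L : ℕ) (μ : Measure ℝ) [SigmaFinite μ]
    (D : Matrix (Fin L) (Fin L) ℂ) (n : ℕ) : ℂ :=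
  ∫ ω, ntr ((D * (vmat N L ω)ᴴ * vmat N L ω) ^ n) ∂(phases L μ)

/-- `D_ρ = Π_{W block of ρ} lim tr_L (Π_{k ∈ W} D_k(N))`, expressed from the joint limit
distribution data `Dlim`. -/
def Dpart {n : ℕ} (Dlim : ∀ s : ℕ, (Fin s → Fin n) → ℂ) (ρ : PartN n) : ℂ :=
  ∏ W ∈ ρ.parts, Dlim W.card (fun j => ((W.orderIsoOfFin rfl j : Fin n)))

/-- `|S_{ρ,N}|`: the number of tuples `(i_1,…,i_n) ∈ {0,…,N-1}^n` with
`Σ_{k ∈ W} i_{k-1} = Σ_{k ∈ W} i_k` for every block `W` of `ρ` (cyclically). -/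
def Svol (n : ℕ) (ρ : PartN n) (N : ℕ) : ℕ :=
  Nat.card {i : Fin n → Fin N //
    ∀ W ∈ ρ.parts, ∑ k ∈ W, ((i (cyc k) : ℕ)) = ∑ k ∈ W, ((i k : ℕ))}

/-- A partition is noncrossing if there are no `i < j < k < l` with `i ∼ k` and `j ∼ l`
lying in two different blocks. -/
def IsNoncrossing {n : ℕ} (ρ : PartN n) : Prop :=
  ∀ i j k l : Fin n, i < j → j < k → k < l →
    blkOf ρ i = blkOf ρ k → blkOf ρ j = blkOf ρ l → blkOf ρ i = blkOf ρ j

/-- The complex Gaussian law on `ℂ` with total variance `σ^2`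
(independent real and imaginary parts, each `N(0, σ²/2)`). -/
def cgauss (σ : ℝ) : Measure ℂ :=
  Measure.map (fun p : ℝ × ℝ => ((p.1 : ℝ) : ℂ) + ((p.2 : ℝ) : ℂ) * Complex.I)
    ((gaussianReal 0 (σ ^ 2 / 2).toNNReal).prod (gaussianReal 0 (σ ^ 2 / 2).toNNReal))

/-- The law of an `m × k` array of i.i.d. complex Gaussian entries of variance `σ²`. -/
def gElem (m k : ℕ) (σ : ℝ) : Measure (Fin m → Fin k → ℂ) :=
  Measure.pi fun _ => Measure.pi fun _ => cgauss σ

instance (σ : ℝ) : IsProbabilityMeasure (cgauss σ) := by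
  unfold cgauss
  have : Measurable fun p : ℝ × ℝ => ((p.1 : ℝ) : ℂ) + ((p.2 : ℝ) : ℂ) * Complex.I := by
    fun_prop
  exact Measure.isProbabilityMeasure_map this.aemeasurable

instance (m k : ℕ) (σ : ℝ) : IsProbabilityMeasure (gElem m k σ) := by
  unfold gElem; infer_instance

end

noncomputable section

/-- Generalized `N × L` Vandermonde matrix with power distribution `f`:
entry `(k, l)` is `N^{-1/2} exp(-i ⌊N f(k/N)⌋ ω_l)`. -/
def gvmat (f : ℝ → ℝ) (N L : ℕ) (ω : Fin L → ℝ) : Matrix (Fin N) (Fin L) ℂ :=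
  fun k l => (Real.sqrt N : ℂ)⁻¹ *
    Complex.exp (-Complex.I * ((⌊(N : ℝ) * f (((k : ℕ) : ℝ) / (N : ℝ))⌋ : ℤ) : ℂ) *
      ((ω l : ℝ) : ℂ))

/-- Generalized Vandermonde mixed moment expansion coefficient `K_{ρ,ω,f,N}`. -/
def KcoefGen (n : ℕ) (f : ℝ → ℝ) (μ : Measure ℝ) [SigmaFinite μ] (ρ : PartN n) (N : ℕ) : ℂ :=
  (N : ℂ) ^ ((ρ.parts.card : ℤ) - (n : ℤ) - 1) *
    ∑ i : Fin n → Fin N,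
      ∫ x : {W // W ∈ ρ.parts} → ℝ,
        Complex.exp (Complex.I * ∑ k : Fin n,
          ((⌊(N : ℝ) * f (((i k : ℕ) : ℝ) / (N : ℝ))⌋ : ℤ) : ℂ) *
            (((x (blkSub ρ (cyc k)) : ℝ) : ℂ) - ((x (blkSub ρ k) : ℝ) : ℂ)))
      ∂(Measure.pi fun _ => μ)

/-- Mixed moment for generalized Vandermonde matrices. -/
def mixedMomentGen (f : ℝ → ℝ) (N L n : ℕ) (μ : Measure ℝ) [SigmaFinite μ]
    (D : Fin n → Matrix (Fin L) (Fin L) ℂ) : ℂ :=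
  ∫ ω, ntr ((List.ofFn fun k : Fin n => D k * (gvmat f N L ω)ᴴ * gvmat f N L ω).prod)
    ∂(phases L μ)

/-- `E[tr_L((V_1ᴴ V_2 V_2ᴴ V_1)^n)]` for independent Vandermonde matrices `V_1, V_2`. -/
def mom2V (μ : Measure ℝ) [SigmaFinite μ] (N L : ℕ) (n : ℕ) : ℂ :=
  ∫ w : (Fin L → ℝ) × (Fin L → ℝ),
    ntr (((vmat N L w.1)ᴴ * vmat N L w.2 * (vmat N L w.2)ᴴ * vmat N L w.1) ^ n)
  ∂((phases L μ).prod (phases L μ))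

/-- The sample covariance matrix `W = K⁻¹ Y Yᴴ` with `Y = V P^{1/2} S + Z`. -/
def sampleCov (N L K : ℕ) (P : Fin L → ℝ)
    (z : (Fin L → ℝ) × ((Fin L → Fin K → ℂ) × (Fin N → Fin K → ℂ))) :
    Matrix (Fin N) (Fin N) ℂ :=
  ((K : ℂ))⁻¹ •
    ((vmat N L z.1 * Matrix.diagonal (fun l => ((Real.sqrt (P l) : ℝ) : ℂ)) * Matrix.of z.2.1
        + Matrix.of z.2.2) *
      (vmat N L z.1 * Matrix.diagonal (fun l => ((Real.sqrt (P l) : ℝ) : ℂ)) * Matrix.of z.2.1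
        + Matrix.of z.2.2)ᴴ)

/-- Joint law of the phases of `V`, the entries of `S` (standard complex Gaussian) and the
entries of `Z` (complex Gaussian of variance `σ²`), all independent. -/
def sampleMeasure (N L K : ℕ) (μ : Measure ℝ) [SigmaFinite μ] (σ : ℝ) :
    Measure ((Fin L → ℝ) × ((Fin L → Fin K → ℂ) × (Fin N → Fin K → ℂ))) :=
  (phases L μ).prod ((gElem L K 1).prod (gElem N K σ))

/-- `E[tr_N(W^i)]` for the model `Y = V P^{1/2} S + Z`, `W = K⁻¹ Y Yᴴ`. -/
def Wmom (N L K : ℕ) (μ : Measure ℝ) [SigmaFinite μ] (σ : ℝ) (P : Fin L → ℝ) (i : ℕ) : ℂ :=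
  ∫ z, ntr ((sampleCov N L K P z) ^ i) ∂(sampleMeasure N L K μ σ)

/-- Moments of the diagonal power matrix: `P_i = tr_L(P^i)`. -/
def Pm (L : ℕ) (P : Fin L → ℝ) (i : ℕ) : ℂ := (L : ℂ)⁻¹ * ∑ l, ((P l : ℝ) : ℂ) ^ i

/-- Sample covariance for the transposed model `Y = Vᵀ S + Z`, `W = K⁻¹ Y Yᴴ`. -/
def sampleCovT (N L K : ℕ)
    (z : (Fin L → ℝ) × ((Fin N → Fin K → ℂ) × (Fin L → Fin K → ℂ))) :
    Matrix (Fin L) (Fin L) ℂ :=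
  ((K : ℂ))⁻¹ •
    (((vmat N L z.1)ᵀ * Matrix.of z.2.1 + Matrix.of z.2.2) *
      ((vmat N L z.1)ᵀ * Matrix.of z.2.1 + Matrix.of z.2.2)ᴴ)

def sampleMeasureT (N L K : ℕ) (μ : Measure ℝ) [SigmaFinite μ] (σ : ℝ) :
    Measure ((Fin L → ℝ) × ((Fin N → Fin K → ℂ) × (Fin L → Fin K → ℂ))) :=
  (phases L μ).prod ((gElem N K 1).prod (gElem L K σ))

/-- `E[tr_L(W^i)]` for the transposed model. -/
def WmomT (N L K : ℕ) (μ : Measure ℝ) [SigmaFinite μ] (σ : ℝ) (i : ℕ) : ℂ :=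
  ∫ z, ntr ((sampleCovT N L K z) ^ i) ∂(sampleMeasureT N L K μ σ)

end

/-
For each of the six partitions the block equations only say that a few sums of indices agree,
once some indices `i` are replaced by `N - 1 - i`. So `|S_{ρ,N}|` is a sum, over the common value
`s`, of products of the numbers `c_k(s)` of `k`-tuples in `{0, …, N-1}` with sum `s`; for
instance it is `∑ₛ c₂(s)²` for `{{1,3},{2,4}}`. The counts `c₂` and `c₃` are piecewise
polynomial (`c₂(s) = s + 1` and `c₃(s) = (s + 1)(s + 2)/2` for `s < N`, and both are symmetric
under `s ↦ k(N - 1) - s`), so `|S_{ρ,N}|` is an explicit polynomial in `N` of degree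
`n + 1 - |ρ|`, whose leading coefficient is the limit.
-/

def tupleSum {k N : ℕ} (x : Fin k → Fin N) : ℕ := ∑ j, (x j : ℕ)

def tupleSumCount (N k s : ℕ) : ℕ := #{x : Fin k → Fin N | tupleSum x = s}

section FiberCount

variable {α β γ : Type*} [Fintype α] [Fintype β] [DecidableEq γ]

theorem card_filter_eq_comp (f : α → γ) (g : β → γ) :
    #{p : α × β | f p.1 = g p.2} = ∑ b, #{x | f x = g b} := by
  simp only [card_filter, Fintype.sum_prod_type_right]

theorem card_filter_eq_comp_and_eq_comp (f : α → γ) (g : β → γ) :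
    #{p : α × α × β | f p.1 = g p.2.2 ∧ f p.2.1 = g p.2.2}
      = ∑ b, #{x | f x = g b} ^ 2 := by
  simp only [card_filter, Fintype.sum_prod_type_right, sq, sum_mul_sum, ite_zero_mul_ite_zero,
    mul_one]
  exact sum_congr rfl fun b _ => sum_comm

theorem sum_comp_eq_sum_card_filter_mul (f : α → γ) (t : Finset γ) (hf : ∀ x, f x ∈ t)
    (φ : γ → ℕ) :
    ∑ x, φ (f x) = ∑ c ∈ t, #{x | f x = c} * φ c := by
  rw [← sum_fiberwise_of_maps_to (fun x _ => hf x)]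
  refine sum_congr rfl fun c _ => ?_
  rw [sum_congr rfl fun x hx => by rw [(mem_filter.1 hx).2], sum_const, smul_eq_mul]

end FiberCount

section TupleSum

variable {k M : ℕ}

theorem tupleSum_le (x : Fin k → Fin (M + 1)) : tupleSum x ≤ k * M := by
  simpa [tupleSum] using sum_le_card_nsmul univ (fun j => (x j : ℕ)) M fun j _ => Fin.is_le (x j)

theorem tupleSum_mem_range (x : Fin k → Fin (M + 1)) : tupleSum x ∈ range (k * M + 1) :=
  mem_range.2 (Nat.lt_succ_of_le (tupleSum_le x))

theorem tupleSum_rev_comp (x : Fin k → Fin (M + 1)) :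
    tupleSum (Fin.rev ∘ x) = k * M - tupleSum x := by
  have h : tupleSum (Fin.rev ∘ x) + tupleSum x = k * M := by
    rw [tupleSum, tupleSum, ← sum_add_distrib]
    calc ∑ j, (((Fin.rev ∘ x) j : ℕ) + x j) = ∑ _j : Fin k, M :=
          sum_congr rfl fun j _ => by simp only [Function.comp, Fin.val_rev]; omega
      _ = k * M := by simp
  omega

theorem tupleSumCount_reflect {s : ℕ} (hs : s ≤ k * M) :
    tupleSumCount (M + 1) k (k * M - s) = tupleSumCount (M + 1) k s := by
  refine card_nbij' (Fin.rev ∘ ·) (Fin.rev ∘ ·) ?_ ?_ ?_ ?_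
  · intro x hx
    simp only [coe_filter, Set.mem_ofPred_eq, mem_univ, true_and, tupleSum_rev_comp] at hx ⊢
    have := tupleSum_le x; omega
  · intro x hx
    simp only [coe_filter, Set.mem_ofPred_eq, mem_univ, true_and, tupleSum_rev_comp] at hx ⊢
    omega
  all_goals intro x _; funext j; simp

theorem tupleSum_cons {N : ℕ} (a : Fin N) (y : Fin k → Fin N) :
    tupleSum (Fin.cons a y : Fin (k + 1) → Fin N) = a + tupleSum y := by
  simp [tupleSum, Fin.sum_univ_succ]

theorem tupleSumCount_succ (N s : ℕ) :
    tupleSumCount N (k + 1) s = ∑ a ∈ range (min N (s + 1)), tupleSumCount N k (s - a) := by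
  have h : tupleSumCount N (k + 1) s
      = ∑ a : Fin N, #{y : Fin k → Fin N | a + tupleSum y = s} := by
    rw [tupleSumCount, card_filter, ← (Fin.consEquiv fun _ => Fin N).sum_comp,
      Fintype.sum_prod_type]
    simp only [card_filter, Fin.consEquiv, Equiv.coe_fn_mk, tupleSum_cons]
  have hr : range (min N (s + 1)) = {a ∈ range N | a ≤ s} := by ext a; simp
  rw [h, hr, sum_filter,
    ← Fin.sum_univ_eq_sum_range fun a => if a ≤ s then tupleSumCount N k (s - a) else 0]
  refine sum_congr rfl fun a _ => ?_
  split_ifs with ha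
  · exact congrArg card (filter_congr fun y _ => by omega)
  · exact card_eq_zero.2 (filter_eq_empty_iff.2 fun y _ => by omega)

theorem tupleSumCount_one {N t : ℕ} (ht : t < N) : tupleSumCount N 1 t = 1 :=
  card_eq_one.2 ⟨fun _ => ⟨t, ht⟩, by ext x; simp [tupleSum, funext_iff, Fin.ext_iff]⟩

theorem tupleSumCount_two_of_le {s : ℕ} (hs : s ≤ M) : tupleSumCount (M + 1) 2 s = s + 1 := by
  rw [tupleSumCount_succ, min_eq_right (by omega),
    sum_congr rfl fun a _ => tupleSumCount_one (by omega : s - a < M + 1)]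
  simp

theorem tupleSumCount_two_of_ge {s : ℕ} (h₁ : M ≤ s) (h₂ : s ≤ 2 * M) :
    tupleSumCount (M + 1) 2 s = 2 * M + 1 - s := by
  rw [← tupleSumCount_reflect h₂, tupleSumCount_two_of_le (by omega)]
  omega

end TupleSum

theorem sum_range_eq_of_quartic {f : ℕ → ℝ} (a b c d e : ℝ)
    (n : ℕ) (hf : ∀ i < n, f i = a + b * i + c * i ^ 2 + d * i ^ 3 + e * i ^ 4) :
    ∑ i ∈ range n, f i = a * n + b * (n * (n - 1) / 2) + c * (n * (n - 1) * (2 * n - 1) / 6)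
      + d * (n * (n - 1) / 2) ^ 2
      + e * (n * (n - 1) * (2 * n - 1) * (3 * n ^ 2 - 3 * n - 1) / 30) := by
  induction n with
  | zero => simp
  | succ n ih =>
    rw [sum_range_succ, ih fun i hi => hf i (by omega), hf n (by omega)]
    push_cast; ring

section TupleSumValues

variable {M : ℕ}

theorem tupleSumCount_three_of_le {s : ℕ} (hs : s ≤ M) :
    (tupleSumCount (M + 1) 3 s : ℝ) = (s + 1) * (s + 2) / 2 := by
  have h : tupleSumCount (M + 1) 3 s = ∑ j ∈ range (s + 1), (j + 1) := by
    rw [tupleSumCount_succ, min_eq_right (by omega), ← sum_range_reflect]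
    refine sum_congr rfl fun j hj => ?_
    rw [mem_range] at hj
    rw [tupleSumCount_two_of_le (by omega)]
    omega
  rw [h, Nat.cast_sum, sum_range_eq_of_quartic 1 1 0 0 0 _ fun j _ => by push_cast; ring]
  push_cast; ring

theorem tupleSumCount_three_add_of_le {v : ℕ} (hv : v ≤ M) :
    (tupleSumCount (M + 1) 3 (M + v) : ℝ) = (M + 1) * (M + 2) / 2 + v * (M - v) := by
  obtain ⟨n, rfl⟩ : ∃ n, M = v + n := ⟨M - v, by omega⟩
  have h : tupleSumCount (v + n + 1) 3 (v + n + v)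
      = ∑ b ∈ range (n + 1), (v + b + 1) + ∑ i ∈ range v, (v + n - i) := by
    have e : range (v + n + 1) = range (n + 1 + v) := by congr 1; omega
    rw [tupleSumCount_succ, min_eq_left (by omega), ← sum_range_reflect, e, sum_range_add]
    congr 1 <;> refine sum_congr rfl fun b hb => ?_ <;> rw [mem_range] at hb
    · rw [tupleSumCount_two_of_le (by omega)]; omega
    · rw [tupleSumCount_two_of_ge (by omega) (by omega)]; omega
  rw [h, Nat.cast_add, Nat.cast_sum, Nat.cast_sum,
    sum_range_eq_of_quartic (v + 1) 1 0 0 0 _ fun b _ => by push_cast; ring,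
    sum_range_eq_of_quartic (v + n) (-1) 0 0 0 _ fun i hi => by
      rw [Nat.cast_sub (by omega)]; push_cast; ring]
  push_cast; ring

theorem sum_range_comp_tupleSumCount (k : ℕ) (φ : ℕ → ℝ) :
    ∑ s ∈ range ((k + 2) * M + 1), φ (tupleSumCount (M + 1) (k + 2) s)
      = 2 * ∑ s ∈ range M, φ (tupleSumCount (M + 1) (k + 2) s)
        + ∑ i ∈ range (k * M + 1), φ (tupleSumCount (M + 1) (k + 2) (M + i)) := by
  have hkM : (k + 2) * M = k * M + 2 * M := by ring
  have hlast : ∑ i ∈ range M, φ (tupleSumCount (M + 1) (k + 2) (M + (k * M + 1) + i))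
      = ∑ i ∈ range M, φ (tupleSumCount (M + 1) (k + 2) i) := by
    rw [← sum_range_reflect]
    refine sum_congr rfl fun i hi => ?_
    rw [mem_range] at hi
    rw [← tupleSumCount_reflect (by omega)]
    congr 2
    omega
  rw [hkM, show k * M + 2 * M + 1 = M + (k * M + 1) + M by ring, sum_range_add, sum_range_add,
    hlast]
  ring

theorem sum_tupleSumCount_two_sq :
    ∑ s ∈ range (2 * M + 1), (tupleSumCount (M + 1) 2 s : ℝ) ^ 2
      = (2 * ((M : ℝ) + 1) ^ 3 + (M + 1)) / 3 := by
  have h := sum_range_comp_tupleSumCount (M := M) 0 fun c => (c : ℝ) ^ 2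
  simp only [zero_add, zero_mul, sum_range_one, add_zero] at h
  rw [h, tupleSumCount_two_of_le le_rfl, sum_range_eq_of_quartic 1 2 1 0 0 _ fun s hs => by
    rw [tupleSumCount_two_of_le hs.le]; push_cast; ring]
  push_cast; ring

theorem sum_tupleSumCount_two_cube :
    ∑ s ∈ range (2 * M + 1), (tupleSumCount (M + 1) 2 s : ℝ) ^ 3
      = (((M : ℝ) + 1) ^ 4 + (M + 1) ^ 2) / 2 := by
  have h := sum_range_comp_tupleSumCount (M := M) 0 fun c => (c : ℝ) ^ 3
  simp only [zero_add, zero_mul, sum_range_one, add_zero] at h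
  rw [h, tupleSumCount_two_of_le le_rfl, sum_range_eq_of_quartic 1 3 3 1 0 _ fun s hs => by
    rw [tupleSumCount_two_of_le hs.le]; push_cast; ring]
  push_cast; ring

theorem sum_tupleSumCount_three_add_sq :
    ∑ v ∈ range (M + 1), (tupleSumCount (M + 1) 3 (M + v) : ℝ) ^ 2
      = 9 / 20 * ((M : ℝ) + 1) ^ 5 + 5 / 12 * ((M : ℝ) + 1) ^ 3 + 2 / 15 * ((M : ℝ) + 1) := by
  set A : ℝ := (M + 1) * (M + 2) / 2
  rw [sum_range_eq_of_quartic (A ^ 2) (2 * A * M) (M ^ 2 - 2 * A) (-2 * M) 1 _ fun v hv => by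
    rw [tupleSumCount_three_add_of_le (by omega)]; ring]
  push_cast; ring

theorem sum_tupleSumCount_three_sq :
    ∑ s ∈ range (3 * M + 1), (tupleSumCount (M + 1) 3 s : ℝ) ^ 2
      = 11 / 20 * ((M : ℝ) + 1) ^ 5 + 1 / 4 * ((M : ℝ) + 1) ^ 3 + 1 / 5 * ((M : ℝ) + 1) := by
  have h := sum_range_comp_tupleSumCount (M := M) 1 fun c => (c : ℝ) ^ 2
  simp only [one_mul] at h
  rw [h, sum_tupleSumCount_three_add_sq,
    sum_range_eq_of_quartic 1 3 (13 / 4) (3 / 2) (1 / 4) _ fun s hs => by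
      rw [tupleSumCount_three_of_le hs.le]; ring]
  ring

end TupleSumValues

section TupleSumFibers

variable {k M : ℕ}

theorem card_tupleSum_eq_tupleSum :
    #{p : (Fin k → Fin (M + 1)) × (Fin k → Fin (M + 1)) | tupleSum p.1 = tupleSum p.2}
      = ∑ s ∈ range (k * M + 1), tupleSumCount (M + 1) k s ^ 2 := by
  rw [card_filter_eq_comp]
  refine (sum_comp_eq_sum_card_filter_mul _ _ tupleSum_mem_range
    (tupleSumCount (M + 1) k)).trans ?_
  simp only [tupleSumCount, sq]

theorem card_tupleSum_eq_tupleSum_eq_tupleSum :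
    #{p : (Fin k → Fin (M + 1)) × (Fin k → Fin (M + 1)) × (Fin k → Fin (M + 1)) |
        tupleSum p.1 = tupleSum p.2.1 ∧ tupleSum p.2.1 = tupleSum p.2.2}
      = ∑ s ∈ range (k * M + 1), tupleSumCount (M + 1) k s ^ 3 := by
  have hcond (a b c : ℕ) : a = b ∧ b = c ↔ a = c ∧ b = c := by omega
  rw [filter_congr fun p _ => hcond _ _ _, card_filter_eq_comp_and_eq_comp]
  refine (sum_comp_eq_sum_card_filter_mul _ _ tupleSum_mem_range
    fun s => tupleSumCount (M + 1) k s ^ 2).trans ?_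
  simp only [tupleSumCount, pow_succ' _ 2]

theorem card_tupleSum_eq_add_and_eq_add :
    #{p : (Fin k → Fin (M + 1)) × (Fin k → Fin (M + 1)) × Fin (M + 1) |
        tupleSum p.1 = M + p.2.2 ∧ tupleSum p.2.1 = M + p.2.2}
      = ∑ v ∈ range (M + 1), tupleSumCount (M + 1) k (M + v) ^ 2 := by
  rw [card_filter_eq_comp_and_eq_comp tupleSum fun v : Fin (M + 1) => M + v,
    ← Fin.sum_univ_eq_sum_range fun v => tupleSumCount (M + 1) k (M + v) ^ 2]
  rfl

end TupleSumFibers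

-- Names list the blocks in the paper's numbering `1, …, n`; in Lean the points are `0, …, n-1`.
section Partitions

variable {M : ℕ}

theorem Svol_eq_card {n : ℕ} (ρ : PartN n) (N : ℕ) :
    Svol n ρ N = #{i : Fin n → Fin N |
      ∀ W ∈ ρ.parts, ∑ k ∈ W, (i (cyc k) : ℕ) = ∑ k ∈ W, (i k : ℕ)} := by
  rw [Svol, Nat.card_eq_fintype_card, Fintype.card_subtype]

theorem Svol_13_24 {ρ : PartN 4}
    (h : ρ.parts = {({0, 2} : Finset (Fin 4)), {1, 3}}) :
    Svol 4 ρ (M + 1) = ∑ s ∈ range (2 * M + 1), tupleSumCount (M + 1) 2 s ^ 2 := by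
  rw [Svol_eq_card, ← card_tupleSum_eq_tupleSum]
  refine card_nbij' (fun i => (![i 0, i 2], ![i 1, i 3]))
    (fun p => ![p.1 0, p.2 0, p.1 1, p.2 1]) ?_ ?_ ?_ ?_
  · intro i; simp [h, cyc, tupleSum]
  · intro p; simp [h, cyc, tupleSum]; omega
  · intro i _; funext k; fin_cases k <;> simp
  · rintro ⟨x, y⟩ _
    refine Prod.ext (funext fun k => ?_) (funext fun k => ?_) <;> fin_cases k <;> simp

theorem Svol_14_25_36 {ρ : PartN 6}
    (h : ρ.parts = {({0, 3} : Finset (Fin 6)), {1, 4}, {2, 5}}) :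
    Svol 6 ρ (M + 1) = ∑ s ∈ range (2 * M + 1), tupleSumCount (M + 1) 2 s ^ 3 := by
  rw [Svol_eq_card, ← card_tupleSum_eq_tupleSum_eq_tupleSum]
  refine card_nbij' (fun i => (![i 0, i 3], ![i 1, i 4], ![i 2, i 5]))
    (fun p => ![p.1 0, p.2.1 0, p.2.2 0, p.1 1, p.2.1 1, p.2.2 1]) ?_ ?_ ?_ ?_
  · intro i; simp [h, cyc, tupleSum]
  · intro p; simp [h, cyc, tupleSum]; omega
  · intro i _; funext k; fin_cases k <;> simp
  · rintro ⟨x, y, z⟩ _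
    refine Prod.ext (funext fun k => ?_) (Prod.ext (funext fun k => ?_) (funext fun k => ?_)) <;>
      fin_cases k <;> simp

theorem Svol_14_26_35 {ρ : PartN 6}
    (h : ρ.parts = {({0, 3} : Finset (Fin 6)), {1, 5}, {2, 4}}) :
    Svol 6 ρ (M + 1) = ∑ s ∈ range (2 * M + 1), tupleSumCount (M + 1) 2 s ^ 3 := by
  rw [Svol_eq_card, ← card_tupleSum_eq_tupleSum_eq_tupleSum]
  refine card_nbij' (fun i => (![i 0, (i 5).rev], ![i 2, (i 3).rev], ![i 1, (i 4).rev]))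
    (fun p => ![p.1 0, p.2.2 0, p.2.1 0, (p.2.1 1).rev, (p.2.2 1).rev, (p.1 1).rev]) ?_ ?_ ?_ ?_
  · intro i; simp [h, cyc, tupleSum, Fin.val_rev]; omega
  · intro p; simp [h, cyc, tupleSum, Fin.val_rev]; omega
  · intro i _; funext k; fin_cases k <;> simp
  · rintro ⟨x, y, z⟩ _
    refine Prod.ext (funext fun k => ?_) (Prod.ext (funext fun k => ?_) (funext fun k => ?_)) <;>
      fin_cases k <;> simp

theorem Svol_135_246 {ρ : PartN 6}
    (h : ρ.parts = {({0, 2, 4} : Finset (Fin 6)), {1, 3, 5}}) :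
    Svol 6 ρ (M + 1) = ∑ s ∈ range (3 * M + 1), tupleSumCount (M + 1) 3 s ^ 2 := by
  rw [Svol_eq_card, ← card_tupleSum_eq_tupleSum]
  refine card_nbij' (fun i => (![i 0, i 2, i 4], ![i 1, i 3, i 5]))
    (fun p => ![p.1 0, p.2 0, p.1 1, p.2 1, p.1 2, p.2 2]) ?_ ?_ ?_ ?_
  · intro i; simp [h, cyc, tupleSum, Fin.sum_univ_three]; omega
  · intro p; simp [h, cyc, tupleSum, Fin.sum_univ_three]; omega
  · intro i _; funext k; fin_cases k <;> simp
  · rintro ⟨x, y⟩ _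
    refine Prod.ext (funext fun k => ?_) (funext fun k => ?_) <;> fin_cases k <;> simp

theorem Svol_15_37_246 {ρ : PartN 7}
    (h : ρ.parts = {({0, 4} : Finset (Fin 7)), {2, 6}, {1, 3, 5}}) :
    Svol 7 ρ (M + 1) = ∑ v ∈ range (M + 1), tupleSumCount (M + 1) 3 (M + v) ^ 2 := by
  rw [Svol_eq_card, ← card_tupleSum_eq_add_and_eq_add]
  refine card_nbij' (fun i => (![i 0, i 4, (i 3).rev], ![i 1, i 5, (i 2).rev], i 6))
    (fun p => ![p.1 0, p.2.1 0, (p.2.1 2).rev, (p.1 2).rev, p.1 1, p.2.1 1, p.2.2]) ?_ ?_ ?_ ?_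
  · intro i; simp [h, cyc, tupleSum, Fin.sum_univ_three, Fin.val_rev]; omega
  · intro p; simp [h, cyc, tupleSum, Fin.sum_univ_three, Fin.val_rev]; omega
  · intro i _; funext k; fin_cases k <;> simp
  · rintro ⟨x, y, v⟩ _
    refine Prod.ext (funext fun k => ?_) (Prod.ext (funext fun k => ?_) rfl) <;>
      fin_cases k <;> simp

theorem Svol_16_24_357 {ρ : PartN 7}
    (h : ρ.parts = {({0, 5} : Finset (Fin 7)), {1, 3}, {2, 4, 6}}) :
    Svol 7 ρ (M + 1) = ∑ v ∈ range (M + 1), tupleSumCount (M + 1) 3 (M + v) ^ 2 := by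
  rw [Svol_eq_card, ← card_tupleSum_eq_add_and_eq_add]
  refine card_nbij' (fun i => (![i 6, i 4, (i 5).rev], ![i 1, i 3, (i 2).rev], i 0))
    (fun p => ![p.2.2, p.2.1 0, (p.2.1 2).rev, p.2.1 1, p.1 1, (p.1 2).rev, p.1 0]) ?_ ?_ ?_ ?_
  · intro i; simp [h, cyc, tupleSum, Fin.sum_univ_three, Fin.val_rev]; omega
  · intro p; simp [h, cyc, tupleSum, Fin.sum_univ_three, Fin.val_rev]; omega
  · intro i _; funext k; fin_cases k <;> simp
  · rintro ⟨x, y, v⟩ _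
    refine Prod.ext (funext fun k => ?_) (Prod.ext (funext fun k => ?_) rfl) <;>
      fin_cases k <;> simp

end Partitions

theorem tendsto_of_forall_succ_eq {f : ℕ → ℝ} {a b c : ℝ}
    (hf : ∀ M : ℕ, f (M + 1) = a + b / ((M : ℝ) + 1) ^ 2 + c / ((M : ℝ) + 1) ^ 4) :
    Tendsto f atTop (nhds a) := by
  rw [← tendsto_add_atTop_iff_nat 1]
  have h := tendsto_one_div_add_atTop_nhds_zero_nat (𝕜 := ℝ)
  have h' := ((tendsto_const_nhds (x := a)).add ((h.pow 2).const_mul b)).add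
    ((h.pow 4).const_mul c)
  rw [show a + b * 0 ^ 2 + c * 0 ^ 4 = a by ring] at h'
  exact h'.congr fun M => by rw [hf]; simp only [div_eq_mul_inv, one_mul, inv_pow]

theorem tendsto_Svol_13_24 (ρ : PartN 4)
    (h : ρ.parts = {({0, 2} : Finset (Fin 4)), {1, 3}}) :
    Tendsto (fun N => (Svol 4 ρ N : ℝ) / (N : ℝ) ^ (4 + 1 - ρ.parts.card))
      atTop (nhds (2 / 3)) := by
  have hcard : ρ.parts.card = 2 := by rw [h]; decide
  refine tendsto_of_forall_succ_eq (b := 1 / 3) (c := 0) fun M => ?_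
  rw [hcard, Svol_13_24 h]
  push_cast
  rw [sum_tupleSumCount_two_sq]
  field_simp
  ring

theorem tendsto_Svol_14_25_36 (ρ : PartN 6)
    (h : ρ.parts = {({0, 3} : Finset (Fin 6)), {1, 4}, {2, 5}}) :
    Tendsto (fun N => (Svol 6 ρ N : ℝ) / (N : ℝ) ^ (6 + 1 - ρ.parts.card))
      atTop (nhds (1 / 2)) := by
  have hcard : ρ.parts.card = 3 := by rw [h]; decide
  refine tendsto_of_forall_succ_eq (b := 1 / 2) (c := 0) fun M => ?_
  rw [hcard, Svol_14_25_36 h]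
  push_cast
  rw [sum_tupleSumCount_two_cube]
  field_simp
  ring

theorem tendsto_Svol_14_26_35 (ρ : PartN 6)
    (h : ρ.parts = {({0, 3} : Finset (Fin 6)), {1, 5}, {2, 4}}) :
    Tendsto (fun N => (Svol 6 ρ N : ℝ) / (N : ℝ) ^ (6 + 1 - ρ.parts.card))
      atTop (nhds (1 / 2)) := by
  have hcard : ρ.parts.card = 3 := by rw [h]; decide
  refine tendsto_of_forall_succ_eq (b := 1 / 2) (c := 0) fun M => ?_
  rw [hcard, Svol_14_26_35 h]
  push_cast
  rw [sum_tupleSumCount_two_cube]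
  field_simp
  ring

theorem tendsto_Svol_135_246 (ρ : PartN 6)
    (h : ρ.parts = {({0, 2, 4} : Finset (Fin 6)), {1, 3, 5}}) :
    Tendsto (fun N => (Svol 6 ρ N : ℝ) / (N : ℝ) ^ (6 + 1 - ρ.parts.card))
      atTop (nhds (11 / 20)) := by
  have hcard : ρ.parts.card = 2 := by rw [h]; decide
  refine tendsto_of_forall_succ_eq (b := 1 / 4) (c := 1 / 5) fun M => ?_
  rw [hcard, Svol_135_246 h]
  push_cast
  rw [sum_tupleSumCount_three_sq]
  field_simp

theorem tendsto_Svol_15_37_246 (ρ : PartN 7)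
    (h : ρ.parts = {({0, 4} : Finset (Fin 7)), {2, 6}, {1, 3, 5}}) :
    Tendsto (fun N => (Svol 7 ρ N : ℝ) / (N : ℝ) ^ (7 + 1 - ρ.parts.card))
      atTop (nhds (9 / 20)) := by
  have hcard : ρ.parts.card = 3 := by rw [h]; decide
  refine tendsto_of_forall_succ_eq (b := 5 / 12) (c := 2 / 15) fun M => ?_
  rw [hcard, Svol_15_37_246 h]
  push_cast
  rw [sum_tupleSumCount_three_add_sq]
  field_simp

theorem tendsto_Svol_16_24_357 (ρ : PartN 7)
    (h : ρ.parts = {({0, 5} : Finset (Fin 7)), {1, 3}, {2, 4, 6}}) :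
    Tendsto (fun N => (Svol 7 ρ N : ℝ) / (N : ℝ) ^ (7 + 1 - ρ.parts.card))
      atTop (nhds (9 / 20)) := by
  have hcard : ρ.parts.card = 3 := by rw [h]; decide
  refine tendsto_of_forall_succ_eq (b := 5 / 12) (c := 2 / 15) fun M => ?_
  rw [hcard, Svol_16_24_357 h]
  push_cast
  rw [sum_tupleSumCount_three_add_sq]
  field_simp

/-- Proposition 3 of the paper. Values of `K_{ρ,u}` for six specific
partitions (elements `1,…,n` of the paper are represented as `0,…,n-1 : Fin n`). -/
theorem statement_2 :
    (∀ ρ : PartN 4, ρ.parts = {({0, 2} : Finset (Fin 4)), {1, 3}} →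
      Filter.Tendsto (fun N => (Svol 4 ρ N : ℝ) / (N : ℝ) ^ (4 + 1 - ρ.parts.card))
        Filter.atTop (nhds (2 / 3))) ∧
    (∀ ρ : PartN 6, ρ.parts = {({0, 3} : Finset (Fin 6)), {1, 4}, {2, 5}} →
      Filter.Tendsto (fun N => (Svol 6 ρ N : ℝ) / (N : ℝ) ^ (6 + 1 - ρ.parts.card))
        Filter.atTop (nhds (1 / 2))) ∧
    (∀ ρ : PartN 6, ρ.parts = {({0, 3} : Finset (Fin 6)), {1, 5}, {2, 4}} →
      Filter.Tendsto (fun N => (Svol 6 ρ N : ℝ) / (N : ℝ) ^ (6 + 1 - ρ.parts.card))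
        Filter.atTop (nhds (1 / 2))) ∧
    (∀ ρ : PartN 6, ρ.parts = {({0, 2, 4} : Finset (Fin 6)), {1, 3, 5}} →
      Filter.Tendsto (fun N => (Svol 6 ρ N : ℝ) / (N : ℝ) ^ (6 + 1 - ρ.parts.card))
        Filter.atTop (nhds (11 / 20))) ∧
    (∀ ρ : PartN 7, ρ.parts = {({0, 4} : Finset (Fin 7)), {2, 6}, {1, 3, 5}} →
      Filter.Tendsto (fun N => (Svol 7 ρ N : ℝ) / (N : ℝ) ^ (7 + 1 - ρ.parts.card))
        Filter.atTop (nhds (9 / 20))) ∧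
    (∀ ρ : PartN 7, ρ.parts = {({0, 5} : Finset (Fin 7)), {1, 3}, {2, 4, 6}} →
      Filter.Tendsto (fun N => (Svol 7 ρ N : ℝ) / (N : ℝ) ^ (7 + 1 - ρ.parts.card))
        Filter.atTop (nhds (9 / 20))) :=
  ⟨tendsto_Svol_13_24, tendsto_Svol_14_25_36, tendsto_Svol_14_26_35, tendsto_Svol_135_246,
    tendsto_Svol_15_37_246, tendsto_Svol_16_24_357⟩
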